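/- arXiv:2112.11029 — 2 statements merged into one kernel-verified Lean document; each statement's English description precedes it below -/
import Mathlib

section
/- Let K_1,…,K_n be kernel functions, let j ∈ {1,…,n}, and suppose that K_j is singular. Let J be an arbitrary n-field function. Then for every y ∈ S̄ one has F(x,t) → -∞ as (x,t) → (y, y_j); that is, for every L ∈ ℝ there exists δ > 0 such that F(x,t) ≤ L for all x ∈ S̄ with ‖x - y‖ ≤ δ and all t ∈ [y_j - δ, y_j + δ] ∩ [0,1]. -/
open Set Filter
open scoped BigOperators Topology

noncomputable section

/-- The real part of an extended-real-valued function. -/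
def toR (K : ℝ → EReal) : ℝ → ℝ := fun t => (K t).toReal

/-- A *kernel function*: finite-valued, continuous and concave on `[-1,0)` and `(0,1]`,
never `+∞`, and with coinciding one-sided limits at `0` (given by the value `K 0`). -/
structure IsKernel (K : ℝ → EReal) : Prop where
  ne_top : ∀ t, K t ≠ ⊤
  finite_left : ∀ t ∈ Ico (-1:ℝ) 0, K t ≠ ⊥
  finite_right : ∀ t ∈ Ioc (0:ℝ) 1, K t ≠ ⊥
  cont_left : ContinuousOn (toR K) (Ico (-1:ℝ) 0)
  cont_right : ContinuousOn (toR K) (Ioc (0:ℝ) 1)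
  concave_left : ConcaveOn ℝ (Ico (-1:ℝ) 0) (toR K)
  concave_right : ConcaveOn ℝ (Ioc (0:ℝ) 1) (toR K)
  tendsto_left : Tendsto K (nhdsWithin 0 (Iio 0)) (nhds (K 0))
  tendsto_right : Tendsto K (nhdsWithin 0 (Ioi 0)) (nhds (K 0))

/-- Left one-sided derivative. -/
def Dm (f : ℝ → ℝ) (t : ℝ) : ℝ := derivWithin f (Iio t) t

/-- Right one-sided derivative. -/
def Dp (f : ℝ → ℝ) (t : ℝ) : ℝ := derivWithin f (Ioi t) t

/-- Condition (PM_c): periodized `c`-monotonicity. -/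
def PMcond (K : ℝ → EReal) (c : ℝ) : Prop :=
  ∀ t ∈ Ioo (0:ℝ) 1, c ≤ Dm (toR K) t - Dm (toR K) (t - 1)

/-- An *n-field function*: bounded above, never `+∞`, finite at more than `n` points of
`[0,1]`, where the endpoints count with weight `1/2`. -/
structure IsNField (n : ℕ) (J : ℝ → EReal) : Prop where
  ne_top : ∀ t, J t ≠ ⊤
  bdd : ∃ M : ℝ, ∀ t ∈ Icc (0:ℝ) 1, J t ≤ (M : EReal)
  count : (∃ T : Finset ℝ, ↑T ⊆ {t | t ∈ Ioo (0:ℝ) 1 ∧ J t ≠ ⊥} ∧ n + 1 ≤ T.card) ∨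
    ((∃ T : Finset ℝ, ↑T ⊆ {t | t ∈ Ioo (0:ℝ) 1 ∧ J t ≠ ⊥} ∧ n ≤ T.card) ∧
      (J 0 ≠ ⊥ ∨ J 1 ≠ ⊥))

/-- The open simplex `S`. -/
def openSimplex (n : ℕ) : Set (Fin n → ℝ) :=
  {y | StrictMono y ∧ ∀ i, y i ∈ Ioo (0:ℝ) 1}

/-- The closed simplex `S̄`. -/
def closedSimplex (n : ℕ) : Set (Fin n → ℝ) :=
  {y | Monotone y ∧ ∀ i, y i ∈ Icc (0:ℝ) 1}

/-- The left endpoint `y_j` of `I_j(y)`, with the convention `y_0 = 0`. -/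
def nodeLo {n : ℕ} (y : Fin n → ℝ) (j : ℕ) : ℝ :=
  if h : 0 < j ∧ j ≤ n then y ⟨j - 1, by omega⟩ else 0

/-- The right endpoint `y_{j+1}` of `I_j(y)`, with the convention `y_{n+1} = 1`. -/
def nodeHi {n : ℕ} (y : Fin n → ℝ) (j : ℕ) : ℝ :=
  if h : j < n then y ⟨j, h⟩ else 1

/-- The interval `I_j(y) = [y_j, y_{j+1}]`. -/
def Ij {n : ℕ} (y : Fin n → ℝ) (j : ℕ) : Set ℝ := Icc (nodeLo y j) (nodeHi y j)

/-- The sum of translates function `F(y,t) = J(t) + ∑ K_j(t - y_j)`. -/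
def SOT {n : ℕ} (K : Fin n → ℝ → EReal) (J : ℝ → EReal) (y : Fin n → ℝ) (t : ℝ) : EReal :=
  J t + ∑ i, K i (t - y i)

/-- The interval maximum `m_j(y) = sup_{t ∈ I_j(y)} F(y,t)`. -/
def mj {n : ℕ} (K : Fin n → ℝ → EReal) (J : ℝ → EReal) (y : Fin n → ℝ) (j : ℕ) : EReal :=
  ⨆ t ∈ Ij y j, SOT K J y t

/-- The regularity set `Y`. -/
def regSet {n : ℕ} (K : Fin n → ℝ → EReal) (J : ℝ → EReal) : Set (Fin n → ℝ) :=
  {y ∈ openSimplex n | ∀ j ≤ n, mj K J y j ≠ ⊥}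

/-- The difference function `Φ(y) = (m_1 - m_0, …, m_n - m_{n-1})`. -/
def PhiFun {n : ℕ} (K : Fin n → ℝ → EReal) (J : ℝ → EReal) (y : Fin n → ℝ) : Fin n → ℝ :=
  fun i => (mj K J y ((i : ℕ) + 1)).toReal - (mj K J y (i : ℕ)).toReal

/-- A map between (pseudo)metric spaces is *locally bi-Lipschitz* if every point has a
neighborhood on which the map is a bi-Lipschitz homeomorphism onto its image. -/
def LocallyBiLipschitz {α β : Type*} [PseudoMetricSpace α] [PseudoMetricSpace β]
    (f : α → β) : Prop :=
  ∀ x : α, ∃ U ∈ 𝓝 x, ∃ c C : ℝ, 0 < c ∧ ∀ a ∈ U, ∀ b ∈ U,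
    c * dist a b ≤ dist (f a) (f b) ∧ dist (f a) (f b) ≤ C * dist a b

/-- The relative interior of `[a,b] ⊆ [0,1]` in the space `[0,1]`. -/
def relIntIcc (a b : ℝ) : Set ℝ :=
  (if a = 0 then Ici a else Ioi a) ∩ (if b = 1 then Iic b else Iio b)

/-- Condition `(∞₊)`. -/
def CondInfPlus (J : ℝ → EReal) : Prop :=
  J 0 = ⊥ ∧ Tendsto J (nhdsWithin 0 (Ioi 0)) (nhds ⊥)

/-- Condition `(∞₋)`. -/
def CondInfMinus (J : ℝ → EReal) : Prop :=
  J 1 = ⊥ ∧ Tendsto J (nhdsWithin 1 (Iio 1)) (nhds ⊥)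

/-- Fenton's cusp condition `(∞'₊)`. -/
def CuspPlus (J : ℝ → EReal) : Prop :=
  ∀ M : ℝ, ∃ δ > (0:ℝ), ∀ s t : ℝ, 0 ≤ s → s < t → t ≤ δ →
    J s ≠ ⊥ → J t ≠ ⊥ → M ≤ ((J t).toReal - (J s).toReal) / (t - s)

/-- Fenton's cusp condition `(∞'₋)`. -/
def CuspMinus (J : ℝ → EReal) : Prop :=
  ∀ M : ℝ, ∃ δ > (0:ℝ), ∀ t s : ℝ, 1 - δ ≤ t → t < s → s ≤ 1 →
    J s ≠ ⊥ → J t ≠ ⊥ → ((J t).toReal - (J s).toReal) / (t - s) ≤ -M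

/-- `L : [0,1] → [0,∞)` is log-concave:
`L(λs + (1-λ)t) ≥ L(s)^λ L(t)^{1-λ}`. -/
def LogConcaveOn01 (L : ℝ → ℝ) : Prop :=
  ∀ s ∈ Icc (0:ℝ) 1, ∀ t ∈ Icc (0:ℝ) 1, ∀ l ∈ Icc (0:ℝ) 1,
    L s ^ l * L t ^ (1 - l) ≤ L (l * s + (1 - l) * t)



private lemma ereal_coe_sum {ι : Type*} (s : Finset ι) (f : ι → ℝ) :
    ((∑ i ∈ s, f i : ℝ) : EReal) = ∑ i ∈ s, (f i : EReal) :=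
  map_sum (⟨⟨Real.toEReal, EReal.coe_zero⟩, EReal.coe_add⟩ : ℝ →+ EReal) f s

private lemma small_nbhd {K : ℝ → EReal} {c : EReal}
    (hl : ∀ᶠ s in 𝓝[<] (0:ℝ), K s < c) (hr : ∀ᶠ s in 𝓝[>] (0:ℝ), K s < c)
    (h0 : K 0 < c) : ∃ ε > 0, ∀ s : ℝ, |s| < ε → K s < c := by
  rw [eventually_nhdsWithin_iff, Metric.eventually_nhds_iff] at hl hr
  obtain ⟨ε1, hε1, hl⟩ := hl
  obtain ⟨ε2, hε2, hr⟩ := hr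
  refine ⟨min ε1 ε2, lt_min hε1 hε2, fun s hs => ?_⟩
  rw [abs_lt] at hs
  rcases lt_trichotomy s 0 with h | h | h
  · have hd : dist s 0 < ε1 := by
      rw [Real.dist_eq, sub_zero, abs_of_neg h]
      exact lt_of_lt_of_le (show -s < min ε1 ε2 by linarith [hs.1]) (min_le_left _ _)
    exact hl hd h
  · rwa [h]
  · have hd : dist s 0 < ε2 := by
      rw [Real.dist_eq, sub_zero, abs_of_pos h]
      exact lt_of_lt_of_le hs.2 (min_le_right _ _)
    exact hr hd h

private lemma kernel_bddAbove {K : ℝ → EReal} (hK : IsKernel K) :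
    ∃ M : ℝ, ∀ s ∈ Icc (-1:ℝ) 1, K s ≤ (M : EReal) := by
  obtain ⟨c, hc, -⟩ :=
    EReal.exists_between_coe_real (lt_top_iff_ne_top.2 (hK.ne_top 0))
  obtain ⟨ε, hε, hsmall⟩ := small_nbhd (hK.tendsto_left.eventually_lt_const hc)
    (hK.tendsto_right.eventually_lt_const hc) hc
  set ε' : ℝ := min ε 1 / 2 with hε'def
  have hε'pos : 0 < ε' := by positivity
  have hε'lt : ε' < ε := by
    have := min_le_left ε 1; simp only [hε'def]; linarith
  have hε'le1 : ε' ≤ 1 := by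
    have := min_le_right ε 1; simp only [hε'def]; linarith
  obtain ⟨C1, hC1⟩ := IsCompact.exists_bound_of_continuousOn isCompact_Icc
    (hK.cont_left.mono (fun s hs => ⟨hs.1, lt_of_le_of_lt hs.2 (by linarith)⟩ :
      Icc (-1:ℝ) (-ε') ⊆ Ico (-1:ℝ) 0))
  obtain ⟨C2, hC2⟩ := IsCompact.exists_bound_of_continuousOn isCompact_Icc
    (hK.cont_right.mono (fun s hs => ⟨lt_of_lt_of_le hε'pos hs.1, hs.2⟩ :
      Icc ε' 1 ⊆ Ioc (0:ℝ) 1))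
  refine ⟨max c (max C1 C2), fun s hs => ?_⟩
  rcases le_or_gt s (-ε') with h | h
  · have hmem : s ∈ Icc (-1:ℝ) (-ε') := ⟨hs.1, h⟩
    have hne : K s ≠ ⊥ := hK.finite_left s ⟨hs.1, by linarith [hmem.2]⟩
    have : K s = ((toR K s : ℝ) : EReal) := (EReal.coe_toReal (hK.ne_top s) hne).symm
    rw [this, EReal.coe_le_coe_iff]
    calc toR K s ≤ |toR K s| := le_abs_self _
      _ ≤ C1 := by simpa [Real.norm_eq_abs] using hC1 s hmem
      _ ≤ _ := le_trans (le_max_left _ _) (le_max_right _ _)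
  rcases le_or_gt ε' s with h2 | h2
  · have hmem : s ∈ Icc ε' 1 := ⟨h2, hs.2⟩
    have hne : K s ≠ ⊥ := hK.finite_right s ⟨by linarith, hs.2⟩
    have : K s = ((toR K s : ℝ) : EReal) := (EReal.coe_toReal (hK.ne_top s) hne).symm
    rw [this, EReal.coe_le_coe_iff]
    calc toR K s ≤ |toR K s| := le_abs_self _
      _ ≤ C2 := by simpa [Real.norm_eq_abs] using hC2 s hmem
      _ ≤ _ := le_trans (le_max_right _ _) (le_max_right _ _)
  · have : |s| < ε := lt_trans (abs_lt.2 ⟨by linarith, h2⟩) hε'lt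
    exact le_trans (hsmall s this).le (EReal.coe_le_coe_iff.2 (le_max_left _ _))

private lemma kernel_singular_small {K : ℝ → EReal} (hK : IsKernel K) (hs : K 0 = ⊥)
    (c : ℝ) : ∃ ε > 0, ∀ s : ℝ, |s| ≤ ε → K s ≤ (c : EReal) := by
  have hl := hK.tendsto_left
  have hr := hK.tendsto_right
  rw [hs] at hl hr
  obtain ⟨ε, hε, h⟩ := small_nbhd (hl.eventually_lt_const (EReal.bot_lt_coe c))
      (hr.eventually_lt_const (EReal.bot_lt_coe c)) (hs ▸ EReal.bot_lt_coe c)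
  exact ⟨ε/2, by positivity, fun s hsle => (h s (lt_of_le_of_lt hsle (by linarith))).le⟩


/-- (Lemma 3.1 / `lem:preZ0`.) If the kernel `K_j` is singular, then
`F(x,t) → -∞` as `(x,t) → (y, y_j)`: for every `L ∈ ℝ` there is `δ > 0` with
`F(x,t) ≤ L` whenever `x ∈ S̄`, `‖x - y‖ ≤ δ` and `t ∈ [y_j - δ, y_j + δ] ∩ [0,1]`. -/
theorem sum_of_translates_tendsto_bot_near_singular_node
    {n : ℕ} (hn : 1 ≤ n) (K : Fin n → ℝ → EReal) (J : ℝ → EReal)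
    (hK : ∀ i, IsKernel (K i)) (hJ : IsNField n J)
    (j : Fin n) (hsing : K j 0 = ⊥)
    (y : Fin n → ℝ) (hy : y ∈ closedSimplex n) :
    ∀ L : ℝ, ∃ δ > (0:ℝ), ∀ x ∈ closedSimplex n, dist x y ≤ δ →
      ∀ t ∈ Icc (y j - δ) (y j + δ) ∩ Icc (0:ℝ) 1,
        SOT K J x t ≤ (L : EReal) := by
  intro L
  obtain ⟨MJ, hMJ⟩ := hJ.bdd
  choose M hM using fun i => kernel_bddAbove (hK i)
  set L' : ℝ := L - MJ - ∑ i ∈ Finset.univ.erase j, M i with hL'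
  obtain ⟨ε, hε, hεK⟩ := kernel_singular_small (hK j) hsing L'
  refine ⟨ε/2, by positivity, fun x hx hdist t ht => ?_⟩
  obtain ⟨ht1, ht2⟩ := ht
  have hxI : ∀ i, x i ∈ Icc (0:ℝ) 1 := hx.2
  have hsub : ∀ i, t - x i ∈ Icc (-1:ℝ) 1 := fun i =>
    ⟨by linarith [(hxI i).2, ht2.1], by linarith [(hxI i).1, ht2.2]⟩
  have hj : |t - x j| ≤ ε := by
    have h1 : dist (x j) (y j) ≤ ε/2 := (dist_le_pi_dist x y j).trans hdist
    rw [Real.dist_eq] at h1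
    have h2 : |t - y j| ≤ ε/2 := abs_le.2 ⟨by linarith [ht1.1], by linarith [ht1.2]⟩
    calc |t - x j| = |(t - y j) + (y j - x j)| := by ring_nf
      _ ≤ |t - y j| + |y j - x j| := abs_add_le _ _
      _ ≤ ε/2 + ε/2 := add_le_add h2 (by rwa [abs_sub_comm])
      _ = ε := by ring
  set g : Fin n → ℝ := fun i => if i = j then L' else M i with hg
  have hsumg : ∑ i, g i = L - MJ := by
    rw [← Finset.add_sum_erase _ g (Finset.mem_univ j)]
    have : ∀ i ∈ Finset.univ.erase j, g i = M i := fun i hi => by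
      simp only [hg, if_neg (Finset.mem_erase.1 hi).1]
    rw [Finset.sum_congr rfl this]
    simp only [hg, if_pos rfl, hL']
    ring
  have hsum : ∑ i, K i (t - x i) ≤ ((L - MJ : ℝ) : EReal) := by
    rw [← hsumg, ereal_coe_sum]
    refine Finset.sum_le_sum fun i _ => ?_
    by_cases hij : i = j
    · subst hij
      simp only [hg, if_pos rfl]
      exact hεK _ hj
    · simp only [hg, if_neg hij]
      exact hM i _ (hsub i)
  calc SOT K J x t = J t + ∑ i, K i (t - x i) := rfl
    _ ≤ (MJ : EReal) + ((L - MJ : ℝ) : EReal) := add_le_add (hMJ t ht2) hsum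
    _ = ((MJ + (L - MJ) : ℝ) : EReal) := (EReal.coe_add _ _).symm
    _ = (L : EReal) := by norm_num


end
end

section
/- Suppose the kernel functions K_1,…,K_n are singular and J is an arbitrary n-field function. Then for each j ∈ {0,1,…,n} the interval maximum function m_j : S̄ → ℝ ∪ {-∞} is continuous in the extended sense: whenever x_k → y in S̄, one has m_j(x_k) → m_j(y) in [-∞, +∞). -/
open Set Filter
open scoped BigOperators Topology

noncomputable section

/-!
Every kernel is continuous on `[-1, 1]` as an `EReal`-valued function, so the kernel part
`G(y, t) = ∑ K_i (t - y_i)` of the sum of translates is jointly continuous; singularity makes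
`G = -∞` exactly on the nodes `t = y_i`. Lower semicontinuity of `m_j`: a point `t` with
`F(y, t) > u` is not a node, so it stays in `I_j(x)` for `x` near `y`, and `F(x, t) → F(y, t)`.
Upper semicontinuity: `J` is only bounded above, so we compare `F(x, s)` with `F(y, s)` rather
than with a limit. Near a node `G` is so negative that `F ≤ sup J + G` is small; near any other
point `(y, t)` the sum `G` is finite and continuous, hence `G(x, s) ≤ G(y, s) + ε`, and
`s ∈ I_j(x)` forces `s ∈ I_j(y)`. Compactness of `[0, 1]` makes these local bounds uniform.
-/

namespace IsKernel

variable {K : ℝ → EReal}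

theorem continuousOn_Ico (hK : IsKernel K) : ContinuousOn K (Ico (-1) 0) :=
  (continuous_coe_real_ereal.comp_continuousOn hK.cont_left).congr fun t ht =>
    (EReal.coe_toReal (hK.ne_top t) (hK.finite_left t ht)).symm

theorem continuousOn_Ioc (hK : IsKernel K) : ContinuousOn K (Ioc 0 1) :=
  (continuous_coe_real_ereal.comp_continuousOn hK.cont_right).congr fun t ht =>
    (EReal.coe_toReal (hK.ne_top t) (hK.finite_right t ht)).symm

theorem continuousAt_zero (hK : IsKernel K) : ContinuousAt K 0 :=
  continuousAt_iff_continuous_left_right.2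
    ⟨continuousWithinAt_Iio_iff_Iic.1 hK.tendsto_left,
      continuousWithinAt_Ioi_iff_Ici.1 hK.tendsto_right⟩

theorem continuousOn_Icc (hK : IsKernel K) : ContinuousOn K (Icc (-1) 1) := by
  intro s hs
  rcases lt_trichotomy s 0 with hneg | rfl | hpos
  · exact (hK.continuousOn_Ico s ⟨hs.1, hneg⟩).mono_of_mem_nhdsWithin
      (mem_nhdsWithin.2 ⟨Iio 0, isOpen_Iio, hneg, fun t ht => ⟨ht.2.1, ht.1⟩⟩)
  · exact hK.continuousAt_zero.continuousWithinAt
  · exact (hK.continuousOn_Ioc s ⟨hpos, hs.2⟩).mono_of_mem_nhdsWithin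
      (mem_nhdsWithin.2 ⟨Ioi 0, isOpen_Ioi, hpos, fun t ht => ⟨ht.1, ht.2.2⟩⟩)

theorem exists_forall_le (hK : IsKernel K) : ∃ s₀, ∀ s ∈ Icc (-1 : ℝ) 1, K s ≤ K s₀ := by
  obtain ⟨s₀, -, hmax⟩ :=
    isCompact_Icc.exists_isMaxOn (nonempty_Icc.2 (by norm_num)) hK.continuousOn_Icc
  exact ⟨s₀, fun s hs => hmax hs⟩

end IsKernel

theorem EReal.sum_ne_top {ι : Type*} {s : Finset ι} {f : ι → EReal} (h : ∀ i ∈ s, f i ≠ ⊤) :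
    ∑ i ∈ s, f i ≠ ⊤ :=
  Finset.sum_induction f (· ≠ ⊤) (fun _ _ => EReal.add_ne_top) EReal.zero_ne_top h

section ERealContinuity

variable {X : Type*} [TopologicalSpace X] {s : Set X} {x : X}

theorem ContinuousWithinAt.ereal_add {f g : X → EReal} (hf : ContinuousWithinAt f s x)
    (hg : ContinuousWithinAt g s x) (h₁ : f x ≠ ⊤ ∨ g x ≠ ⊥) (h₂ : f x ≠ ⊥ ∨ g x ≠ ⊤) :
    ContinuousWithinAt (fun y => f y + g y) s x :=
  ContinuousAt.comp_continuousWithinAt (f := fun y => (f y, g y))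
    (EReal.continuousAt_add h₁ h₂) (hf.prodMk hg)

theorem ContinuousWithinAt.ereal_sum {ι : Type*} {f : ι → X → EReal} (T : Finset ι)
    (hf : ∀ i ∈ T, ContinuousWithinAt (f i) s x) (htop : ∀ i ∈ T, f i x ≠ ⊤) :
    ContinuousWithinAt (fun y => ∑ i ∈ T, f i y) s x := by
  have key := Finset.sum_induction f (fun g => ContinuousWithinAt g s x ∧ g x ≠ ⊤)
    (fun g h hg hh =>
      ⟨hg.1.ereal_add hh.1 (Or.inl hg.2) (Or.inr hh.2), EReal.add_ne_top hg.2 hh.2⟩)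
    ⟨continuousWithinAt_const, EReal.zero_ne_top⟩ fun i hi => ⟨hf i hi, htop i hi⟩
  simpa only [Finset.sum_fn] using key.1

end ERealContinuity

theorem eventually_le_iff_of_ne {X : Type*} [TopologicalSpace X] {φ : X → ℝ} {y : X} {t : ℝ}
    (hφ : ContinuousAt φ y) (hne : φ y ≠ t) :
    ∀ᶠ p in 𝓝 (y, t), (φ p.1 ≤ p.2 ↔ φ y ≤ p.2) ∧ (p.2 ≤ φ p.1 ↔ p.2 ≤ φ y) := by
  have hfst : Tendsto (fun p : X × ℝ => φ p.1) (𝓝 (y, t)) (𝓝 (φ y)) :=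
    hφ.tendsto.comp continuous_fst.continuousAt
  have hsnd : Tendsto (fun p : X × ℝ => p.2) (𝓝 (y, t)) (𝓝 t) := continuous_snd.continuousAt
  rcases hne.lt_or_gt with hlt | hgt
  · filter_upwards [hfst.eventually_lt hsnd hlt, hsnd.eventually_const_lt hlt] with p h₁ h₂
    exact ⟨iff_of_true h₁.le h₂.le, iff_of_false h₁.not_ge h₂.not_ge⟩
  · filter_upwards [hsnd.eventually_lt hfst hgt, hsnd.eventually_lt_const hgt] with p h₁ h₂
    exact ⟨iff_of_false h₁.not_ge h₂.not_ge, iff_of_true h₁.le h₂.le⟩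

def kernelSum {n : ℕ} (K : Fin n → ℝ → EReal) (p : (Fin n → ℝ) × ℝ) : EReal :=
  ∑ i, K i (p.2 - p.1 i)

section Simplex

variable {n : ℕ} {K : Fin n → ℝ → EReal} {y : Fin n → ℝ}

theorem sub_mem_Icc_of_mem_closedSimplex (hy : y ∈ closedSimplex n) {t : ℝ}
    (ht : t ∈ Icc (0 : ℝ) 1) (i : Fin n) : t - y i ∈ Icc (-1 : ℝ) 1 :=
  ⟨by linarith [ht.1, (hy.2 i).2], by linarith [ht.2, (hy.2 i).1]⟩

theorem continuousOn_kernelSum (hK : ∀ i, IsKernel (K i)) :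
    ContinuousOn (kernelSum K) (closedSimplex n ×ˢ Icc 0 1) := fun p hp =>
  ContinuousWithinAt.ereal_sum Finset.univ
    (fun i _ => ((hK i).continuousOn_Icc.comp
      (continuous_snd.sub ((continuous_apply i).comp continuous_fst)).continuousOn
      fun _ hq => sub_mem_Icc_of_mem_closedSimplex hq.1 hq.2 i) p hp)
    fun i _ => (hK i).ne_top _

theorem kernelSum_ne_top (hK : ∀ i, IsKernel (K i)) (p : (Fin n → ℝ) × ℝ) :
    kernelSum K p ≠ ⊤ :=
  EReal.sum_ne_top fun i _ => (hK i).ne_top _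

theorem kernelSum_eq_bot_of_apply_eq (hsing : ∀ i, K i 0 = ⊥) {t : ℝ} {i : Fin n} (h : y i = t) :
    kernelSum K (y, t) = ⊥ := by
  dsimp only [kernelSum]
  rw [← Finset.add_sum_erase _ _ (Finset.mem_univ i), h, sub_self, hsing, EReal.bot_add]

theorem exists_kernelSum_le (hK : ∀ i, IsKernel (K i)) :
    ∃ B ≠ ⊤, ∀ y ∈ closedSimplex n, ∀ t ∈ Icc (0 : ℝ) 1, kernelSum K (y, t) ≤ B := by
  choose s₀ hs₀ using fun i => (hK i).exists_forall_le
  exact ⟨∑ i, K i (s₀ i), EReal.sum_ne_top fun i _ => (hK i).ne_top _, fun y hy t ht =>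
    Finset.sum_le_sum fun i _ => hs₀ i _ (sub_mem_Icc_of_mem_closedSimplex hy ht i)⟩

theorem nodeLo_eq_zero_or_apply (j : ℕ) :
    (∀ x : Fin n → ℝ, nodeLo x j = 0) ∨ ∃ i, ∀ x : Fin n → ℝ, nodeLo x j = x i := by
  by_cases h : 0 < j ∧ j ≤ n
  · exact Or.inr ⟨⟨j - 1, by omega⟩, fun x => dif_pos h⟩
  · exact Or.inl fun x => dif_neg h

theorem nodeHi_eq_one_or_apply (j : ℕ) :
    (∀ x : Fin n → ℝ, nodeHi x j = 1) ∨ ∃ i, ∀ x : Fin n → ℝ, nodeHi x j = x i := by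
  by_cases h : j < n
  · exact Or.inr ⟨⟨j, h⟩, fun x => dif_pos h⟩
  · exact Or.inl fun x => dif_neg h

theorem Ij_subset_Icc (hy : y ∈ closedSimplex n) (j : ℕ) : Ij y j ⊆ Icc 0 1 := by
  have hlo : 0 ≤ nodeLo y j := by
    rcases nodeLo_eq_zero_or_apply (n := n) j with h | ⟨i, h⟩
    · exact (h y).ge
    · exact (h y).symm ▸ (hy.2 i).1
  have hhi : nodeHi y j ≤ 1 := by
    rcases nodeHi_eq_one_or_apply (n := n) j with h | ⟨i, h⟩
    · exact (h y).le
    · exact (h y).symm ▸ (hy.2 i).2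
  exact Icc_subset_Icc hlo hhi

theorem eventually_le_iff_of_const_or_apply {φ : (Fin n → ℝ) → ℝ} {t : ℝ}
    (hφ : (∃ c, ∀ x, φ x = c) ∨ ∃ i, ∀ x : Fin n → ℝ, φ x = x i) (hnode : ∀ i, y i ≠ t) :
    ∀ᶠ p in 𝓝 (y, t), (φ p.1 ≤ p.2 ↔ φ y ≤ p.2) ∧ (p.2 ≤ φ p.1 ↔ p.2 ≤ φ y) := by
  rcases hφ with ⟨c, h⟩ | ⟨i, h⟩
  · simp only [h, iff_self, and_self, eventually_true]
  · simp only [h]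
    exact eventually_le_iff_of_ne (φ := fun x : Fin n → ℝ => x i) (continuous_apply i).continuousAt
      (hnode i)

theorem eventually_mem_Ij_iff {t : ℝ} (j : ℕ) (hnode : ∀ i, y i ≠ t) :
    ∀ᶠ p in 𝓝 (y, t), p.2 ∈ Ij p.1 j ↔ p.2 ∈ Ij y j := by
  filter_upwards [eventually_le_iff_of_const_or_apply
      ((nodeLo_eq_zero_or_apply j).imp_left fun h => ⟨0, h⟩) hnode,
    eventually_le_iff_of_const_or_apply
      ((nodeHi_eq_one_or_apply j).imp_left fun h => ⟨1, h⟩) hnode] with p hlo hhi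
  exact and_congr hlo.1 hhi.2

end Simplex

section IntervalMaxima

variable {n : ℕ} {K : Fin n → ℝ → EReal} {J : ℝ → EReal} {y : Fin n → ℝ} {j : ℕ}

theorem SOT_eq_add_kernelSum {t : ℝ} : SOT K J y t = J t + kernelSum K (y, t) := rfl

theorem mj_ne_top (hK : ∀ i, IsKernel (K i)) {M : ℝ} (hM : ∀ t ∈ Icc (0 : ℝ) 1, J t ≤ M)
    (hy : y ∈ closedSimplex n) : mj K J y j ≠ ⊤ := by
  obtain ⟨B, hB, hGB⟩ := exists_kernelSum_le hK
  refine ne_top_of_le_ne_top (EReal.add_ne_top (EReal.coe_ne_top M) hB)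
    (iSup₂_le fun t ht => ?_)
  have ht' := Ij_subset_Icc hy j ht
  exact add_le_add (hM t ht') (hGB y hy t ht')

theorem eventually_lt_mj (hK : ∀ i, IsKernel (K i)) (hsing : ∀ i, K i 0 = ⊥)
    (hy : y ∈ closedSimplex n) {u : EReal} (hu : u < mj K J y j) :
    ∀ᶠ x in 𝓝[closedSimplex n] y, u < mj K J x j := by
  obtain ⟨t, ht, hut⟩ := lt_biSup_iff.1 hu
  have ht01 := Ij_subset_Icc hy j ht
  obtain ⟨hJt, hGt⟩ : J t ≠ ⊥ ∧ kernelSum K (y, t) ≠ ⊥ := by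
    simpa only [SOT_eq_add_kernelSum, ne_eq, EReal.add_eq_bot_iff, not_or] using ne_bot_of_gt hut
  have hnode : ∀ i, y i ≠ t := fun i h => hGt (kernelSum_eq_bot_of_apply_eq hsing h)
  have hcont : ContinuousWithinAt (fun x => SOT K J x t) (closedSimplex n) y :=
    continuousWithinAt_const.ereal_add
      ((continuousOn_kernelSum hK (y, t) ⟨hy, ht01⟩).comp (f := fun x => (x, t))
        (continuous_id.prodMk continuous_const).continuousWithinAt fun _ hx => ⟨hx, ht01⟩)
      (Or.inr hGt) (Or.inl hJt)
  have hmem : ∀ᶠ x in 𝓝 y, t ∈ Ij x j :=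
    (((continuous_id.prodMk continuous_const).tendsto y).eventually
      (eventually_mem_Ij_iff j hnode)).mono fun _ h => h.2 ht
  filter_upwards [hcont.eventually (lt_mem_nhds hut), nhdsWithin_le_nhds hmem] with x hux hx
  exact hux.trans_le (le_biSup (fun s => SOT K J x s) hx)

theorem eventually_SOT_le_of_kernelSum_eq_bot (hK : ∀ i, IsKernel (K i)) {M : ℝ}
    (hM : ∀ t ∈ Icc (0 : ℝ) 1, J t ≤ M) (hy : y ∈ closedSimplex n) {t : ℝ}
    (ht : t ∈ Icc (0 : ℝ) 1) (hbot : kernelSum K (y, t) = ⊥) (b : ℝ) :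
    ∀ᶠ p in 𝓝[closedSimplex n ×ˢ Icc 0 1] (y, t), SOT K J p.1 p.2 ≤ b := by
  have hG := continuousOn_kernelSum hK (y, t) ⟨hy, ht⟩
  rw [ContinuousWithinAt, hbot] at hG
  filter_upwards [hG.eventually_lt_const (EReal.bot_lt_coe (b - M)), self_mem_nhdsWithin]
    with p hp hpS
  calc SOT K J p.1 p.2 ≤ M + (b - M : ℝ) := add_le_add (hM _ hpS.2) hp.le
    _ = b := by rw [← EReal.coe_add, add_sub_cancel]

theorem eventually_kernelSum_le_add (hK : ∀ i, IsKernel (K i)) (hy : y ∈ closedSimplex n)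
    {t : ℝ} (ht : t ∈ Icc (0 : ℝ) 1) (hbot : kernelSum K (y, t) ≠ ⊥) {ε : ℝ} (hε : 0 < ε) :
    ∀ᶠ p in 𝓝[closedSimplex n ×ˢ Icc 0 1] (y, t), kernelSum K p ≤ kernelSum K (y, p.2) + ε := by
  obtain ⟨g, hg⟩ : ∃ g : ℝ, kernelSum K (y, t) = g :=
    ⟨_, (EReal.coe_toReal (kernelSum_ne_top hK _) hbot).symm⟩
  have hG := continuousOn_kernelSum hK (y, t) ⟨hy, ht⟩
  rw [ContinuousWithinAt, hg] at hG
  have hGy : Tendsto (fun p : (Fin n → ℝ) × ℝ => kernelSum K (y, p.2))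
      (𝓝[closedSimplex n ×ˢ Icc 0 1] (y, t)) (𝓝 (g : EReal)) :=
    hG.comp (tendsto_nhdsWithin_iff.2
      ⟨((continuous_const.prodMk continuous_snd).tendsto' (y, t) (y, t) rfl).mono_left
        nhdsWithin_le_nhds,
      eventually_nhdsWithin_of_forall fun p hp => ⟨hy, hp.2⟩⟩)
  have hε2 : 0 < ε / 2 := half_pos hε
  filter_upwards [hG.eventually_lt_const (EReal.coe_lt_coe_iff.2 (lt_add_of_pos_right g hε2)),
    hGy.eventually_const_lt (EReal.coe_lt_coe_iff.2 (sub_lt_self g hε2))] with p hpx hpy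
  calc kernelSum K p ≤ ((g - ε / 2 : ℝ) : EReal) + ε := by
        rw [← EReal.coe_add, show g - ε / 2 + ε = g + ε / 2 by ring]
        exact hpx.le
    _ ≤ kernelSum K (y, p.2) + ε := (EReal.add_lt_add_right_coe hpy _).le

theorem eventually_SOT_le (hK : ∀ i, IsKernel (K i)) (hsing : ∀ i, K i 0 = ⊥) {M : ℝ}
    (hM : ∀ t ∈ Icc (0 : ℝ) 1, J t ≤ M) (hy : y ∈ closedSimplex n) {a b : ℝ} (hab : a < b)
    (hya : mj K J y j < a) {t : ℝ} (ht : t ∈ Icc (0 : ℝ) 1) :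
    ∀ᶠ p in 𝓝[closedSimplex n ×ˢ Icc 0 1] (y, t), p.2 ∈ Ij p.1 j → SOT K J p.1 p.2 ≤ b := by
  rcases eq_or_ne (kernelSum K (y, t)) ⊥ with hbot | hbot
  · exact (eventually_SOT_le_of_kernelSum_eq_bot hK hM hy ht hbot b).mono fun _ h _ => h
  have hnode : ∀ i, y i ≠ t := fun i h => hbot (kernelSum_eq_bot_of_apply_eq hsing h)
  filter_upwards [eventually_kernelSum_le_add hK hy ht hbot (sub_pos.2 hab),
    nhdsWithin_le_nhds (eventually_mem_Ij_iff j hnode)] with p hGp hIj hp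
  calc SOT K J p.1 p.2 ≤ J p.2 + (kernelSum K (y, p.2) + (b - a : ℝ)) := by
        rw [SOT_eq_add_kernelSum]; gcongr
    _ = SOT K J y p.2 + (b - a : ℝ) := (add_assoc _ _ _).symm
    _ ≤ a + (b - a : ℝ) := by
        gcongr; exact (le_biSup (fun s => SOT K J y s) (hIj.1 hp)).trans hya.le
    _ = b := by rw [← EReal.coe_add, add_sub_cancel]

theorem eventually_mj_lt (hK : ∀ i, IsKernel (K i)) (hsing : ∀ i, K i 0 = ⊥) {M : ℝ}
    (hM : ∀ t ∈ Icc (0 : ℝ) 1, J t ≤ M) (hy : y ∈ closedSimplex n) {v : EReal}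
    (hv : mj K J y j < v) : ∀ᶠ x in 𝓝[closedSimplex n] y, mj K J x j < v := by
  obtain ⟨a, hya, hav⟩ := EReal.lt_iff_exists_real_btwn.1 hv
  obtain ⟨b, hab, hbv⟩ := EReal.lt_iff_exists_real_btwn.1 hav
  have hlocal : ∀ t ∈ Icc (0 : ℝ) 1, ∀ᶠ p in 𝓝 (y, t),
      p.1 ∈ closedSimplex n → p.2 ∈ Ij p.1 j → SOT K J p.1 p.2 ≤ b := fun t ht =>
    (eventually_nhdsWithin_iff.1 (eventually_SOT_le hK hsing hM hy
      (EReal.coe_lt_coe_iff.1 hab) hya ht)).mono fun p h hpS hp =>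
        h ⟨hpS, Ij_subset_Icc hpS j hp⟩ hp
  filter_upwards [nhdsWithin_le_nhds (isCompact_Icc.eventually_forall_of_forall_eventually
      (P := fun x s => x ∈ closedSimplex n → s ∈ Ij x j → SOT K J x s ≤ b) hlocal),
    self_mem_nhdsWithin] with x hx hxS
  exact (iSup₂_le fun s hs => hx s (Ij_subset_Icc hxS j hs) hxS hs).trans_lt hbv

end IntervalMaxima

theorem interval_maxima_continuous_general
    {n : ℕ} (K : Fin n → ℝ → EReal) (J : ℝ → EReal)
    (hK : ∀ i, IsKernel (K i)) (hsing : ∀ i, K i 0 = ⊥) (hJ : IsNField n J) :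
    ∀ j ≤ n,
      (∀ y ∈ closedSimplex n, mj K J y j ≠ ⊤) ∧
      ContinuousOn (fun y => mj K J y j) (closedSimplex n) := by
  intro j _
  obtain ⟨M, hM⟩ := hJ.bdd
  refine ⟨fun y hy => mj_ne_top hK hM hy, fun y hy => ?_⟩
  rw [ContinuousWithinAt, tendsto_order]
  exact ⟨fun u hu => eventually_lt_mj hK hsing hy hu,
    fun v hv => eventually_mj_lt hK hsing hM hy hv⟩

/-- (Lemma 3.3 / `lem:mjcont2`.) For singular kernels and an arbitrary
`n`-field function, each interval maximum function `m_j : S̄ → ℝ ∪ {-∞}` is continuous in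
the extended sense (with values in `EReal`, never `+∞`). -/
theorem interval_maxima_continuous
    {n : ℕ} (hn : 1 ≤ n) (K : Fin n → ℝ → EReal) (J : ℝ → EReal)
    (hK : ∀ i, IsKernel (K i)) (hsing : ∀ i, K i 0 = ⊥) (hJ : IsNField n J) :
    ∀ j ≤ n,
      (∀ y ∈ closedSimplex n, mj K J y j ≠ ⊤) ∧
      ContinuousOn (fun y => mj K J y j) (closedSimplex n) :=
  interval_maxima_continuous_general K J hK hsing hJ

end
end
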